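/- arXiv:2207.11097 — 3 statements merged into one kernel-verified Lean document; each statement's English description precedes it below -/
import Mathlib

section
/- In every double Boolean algebra D, for all x, y in D: if x ⊓ y = ⊥ then x ⊓ x ⊑ ¬y, and if x ⊓ x ⊑ ¬y then x ⊓ y ⊑ ⊥. -/
structure DBA (D : Type) where
  cup : D → D → D
  cap : D → D → D
  neg : D → D
  opp : D → D
  top : D
  bot : D
  ax1a : ∀ x y, cap (cap x x) y = cap x y
  ax1b : ∀ x y, cup (cup x x) y = cup x y
  ax2a : ∀ x y, cap x y = cap y x
  ax2b : ∀ x y, cup x y = cup y x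
  ax3a : ∀ x y z, cap x (cap y z) = cap (cap x y) z
  ax3b : ∀ x y z, cup x (cup y z) = cup (cup x y) z
  ax4a : ∀ x, neg (cap x x) = neg x
  ax4b : ∀ x, opp (cup x x) = opp x
  ax5a : ∀ x y, cap x (cup x y) = cap x x
  ax5b : ∀ x y, cup x (cap x y) = cup x x
  ax6a : ∀ x y z, cap x (neg (cap (neg y) (neg z))) =
    neg (cap (neg (cap x y)) (neg (cap x z)))
  ax6b : ∀ x y z, cup x (opp (cup (opp y) (opp z))) =
    opp (cup (opp (cup x y)) (opp (cup x z)))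
  ax7a : ∀ x y, cap x (neg (cap (neg x) (neg y))) = cap x x
  ax7b : ∀ x y, cup x (opp (cup (opp x) (opp y))) = cup x x
  ax8a : ∀ x y, neg (neg (cap x y)) = cap x y
  ax8b : ∀ x y, opp (opp (cup x y)) = cup x y
  ax9a : ∀ x, cap x (neg x) = bot
  ax9b : ∀ x, cup x (opp x) = top
  ax10a : neg bot = cap top top
  ax10b : opp top = cup bot bot
  ax11a : neg top = bot
  ax11b : opp bot = top
  ax12 : ∀ x, cup (cap x x) (cap x x) = cap (cup x x) (cup x x)

/-- The quasi-order on a double Boolean algebra. -/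
def DBA.le {D : Type} (A : DBA D) (x y : D) : Prop :=
  A.cap x y = A.cap x x ∧ A.cup x y = A.cup y y

/-- A double Boolean algebra is pure if every element is ⊓- or ⊔-idempotent. -/
def DBA.Pure {D : Type} (A : DBA D) : Prop :=
  ∀ x, A.cap x x = x ∨ A.cup x x = x

theorem DBA.capIdem {D : Type} (A : DBA D) (x y : D) :
    A.cap (A.cap x y) (A.cap x y) = A.cap x y := by
  calc A.cap (A.cap x y) (A.cap x y)
      = A.cap x (A.cap y (A.cap x y)) := (A.ax3a x y (A.cap x y)).symm
    _ = A.cap x (A.cap (A.cap y x) y) := by rw [A.ax3a y x y]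
    _ = A.cap x (A.cap (A.cap x y) y) := by rw [A.ax2a y x]
    _ = A.cap x (A.cap x (A.cap y y)) := by rw [← A.ax3a x y y]
    _ = A.cap (A.cap x x) (A.cap y y) := by rw [A.ax3a]
    _ = A.cap x (A.cap y y) := by rw [A.ax1a]
    _ = A.cap (A.cap y y) x := A.ax2a _ _
    _ = A.cap y x := by rw [A.ax1a]
    _ = A.cap x y := A.ax2a _ _

theorem DBA.capTop {D : Type} (A : DBA D) (x : D) :
    A.cap x A.top = A.cap x x := by
  rw [← A.ax9b x, A.ax5a]

theorem DBA.key {D : Type} (A : DBA D) (x y : D) (h : A.cap x y = A.bot) :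
    A.cap x (A.neg y) = A.cap x x := by
  have e := A.ax6a x y (A.neg y)
  rw [A.ax9a (A.neg y), A.ax10a, h, A.ax10a,
      A.ax2a x (A.cap A.top A.top), A.ax1a, A.ax2a A.top x, A.capTop,
      A.ax1a, A.ax2a A.top, A.capTop, A.ax4a, A.ax8a] at e
  exact e.symm

theorem stmt0 {D : Type} (A : DBA D) (x y : D) :
    (A.cap x y = A.bot → A.le (A.cap x x) (A.neg y)) ∧
    (A.le (A.cap x x) (A.neg y) → A.le (A.cap x y) A.bot) := by
  constructor
  · intro h
    have k : A.cap x (A.neg y) = A.cap x x := A.key x y h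
    constructor
    · rw [A.ax1a, k, A.capIdem]
    · rw [A.ax2b (A.cap x x) (A.neg y), ← A.ax5b (A.neg y) (A.cap x x),
        A.ax2a (A.neg y) (A.cap x x), A.ax1a, k]
  · intro h
    have k : A.cap x (A.neg y) = A.cap x x := by
      have h1 := h.1
      rw [A.ax1a, A.ax1a, A.ax3a, A.ax1a] at h1
      exact h1
    have hs : A.cap x y = A.cap x A.bot := by
      rw [← A.ax1a x y, ← k, ← A.ax3a, A.ax2a (A.neg y) y, A.ax9a]
    have hb : A.cap A.bot A.bot = A.bot := by
      rw [← A.ax9a x]; exact A.capIdem x (A.neg x)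
    constructor
    · rw [A.capIdem, hs, ← A.ax3a, hb]
    · rw [hs, A.ax2a x A.bot, A.ax2b (A.cap A.bot x) A.bot]
      exact A.ax5b A.bot x
end

section
/- In every pure double Boolean algebra, the relation ⊑ (defined by x ⊑ y iff x⊓y = x⊓x and x⊔y = y⊔y) is a partial order, i.e. it is reflexive, transitive, and antisymmetric. -/
theorem stmt1 {D : Type} (A : DBA D) (hpure : A.Pure) :
    (∀ x, A.le x x) ∧
    (∀ x y z, A.le x y → A.le y z → A.le x z) ∧
    (∀ x y, A.le x y → A.le y x → x = y) := by
  refine ⟨fun x => ⟨rfl, rfl⟩, ?_, ?_⟩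
  · rintro x y z ⟨hc1, hu1⟩ ⟨hc2, hu2⟩
    constructor
    · calc A.cap x z = A.cap (A.cap x x) z := by rw [A.ax1a]
        _ = A.cap (A.cap x y) z := by rw [hc1]
        _ = A.cap x (A.cap y z) := by rw [A.ax3a]
        _ = A.cap x (A.cap y y) := by rw [hc2]
        _ = A.cap (A.cap y y) x := A.ax2a _ _
        _ = A.cap y x := A.ax1a _ _
        _ = A.cap x y := A.ax2a _ _
        _ = A.cap x x := hc1
    · calc A.cup x z = A.cup (A.cup z z) x := by rw [A.ax1b, A.ax2b]
        _ = A.cup (A.cup y z) x := by rw [hu2]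
        _ = A.cup x (A.cup y z) := A.ax2b _ _
        _ = A.cup (A.cup x y) z := by rw [A.ax3b]
        _ = A.cup (A.cup y y) z := by rw [hu1]
        _ = A.cup y z := A.ax1b _ _
        _ = A.cup z z := hu2
  · rintro x y ⟨hc1, hu1⟩ ⟨hc2, hu2⟩
    have hc : A.cap x x = A.cap y y := by rw [← hc1, A.ax2a, hc2]
    have hu : A.cup x x = A.cup y y := by rw [← hu2, A.ax2b, hu1]
    rcases hpure x with hx | hx
    · rcases hpure y with hy | hy
      · rw [← hx, ← hy, hc]
      · have h12 := A.ax12 x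
        rw [hx] at h12
        rw [hu, hy] at h12
        rw [← hx, hc, ← h12]
    · rcases hpure y with hy | hy
      · have h12 := A.ax12 y
        rw [hy, ← hu, hx] at h12
        rw [h12, hc, hy]
      · rw [← hx, ← hy, hu]
end

section
/- In every double Boolean algebra D, for all x, y ∈ D: x ⊑ y if and only if ¬y ⊑ ¬x and ⌟y ⊑ ⌟x. -/
section Aux
variable {D : Type} (A : DBA D)

lemma DBA.negneg (x : D) : A.neg (A.neg x) = A.cap x x := by
  rw [show A.neg x = A.neg (A.cap x x) from (A.ax4a x).symm, A.ax8a]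

lemma DBA.oppopp (x : D) : A.opp (A.opp x) = A.cup x x := by
  rw [show A.opp x = A.opp (A.cup x x) from (A.ax4b x).symm, A.ax8b]

lemma DBA.capcap (x y : D) : A.cap (A.cap x x) (A.cap y y) = A.cap x y := by
  rw [A.ax1a, A.ax2a x (A.cap y y), A.ax1a, A.ax2a]

lemma DBA.cupcup (x y : D) : A.cup (A.cup x x) (A.cup y y) = A.cup x y := by
  rw [A.ax1b, A.ax2b x (A.cup y y), A.ax1b, A.ax2b]

lemma DBA.negidem (x : D) : A.cap (A.neg x) (A.neg x) = A.neg x := by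
  calc A.cap (A.neg x) (A.neg x)
      = A.neg (A.neg (A.neg x)) := (A.negneg (A.neg x)).symm
    _ = A.neg (A.cap x x) := by rw [A.negneg x]
    _ = A.neg x := A.ax4a x

lemma DBA.oppidem (x : D) : A.cup (A.opp x) (A.opp x) = A.opp x := by
  calc A.cup (A.opp x) (A.opp x)
      = A.opp (A.opp (A.opp x)) := (A.oppopp (A.opp x)).symm
    _ = A.opp (A.cup x x) := by rw [A.oppopp x]
    _ = A.opp x := A.ax4b x

lemma DBA.negK2 (x y : D) :
    A.cap (A.neg y) (A.neg (A.cap x y)) = A.cap (A.neg y) (A.neg y) := by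
  have h := A.ax7a (A.neg y) (A.neg x)
  rw [A.negneg, A.negneg, A.capcap, A.ax2a y x] at h
  exact h

lemma DBA.oppK2 (x y : D) :
    A.cup (A.opp y) (A.opp (A.cup x y)) = A.cup (A.opp y) (A.opp y) := by
  have h := A.ax7b (A.opp y) (A.opp x)
  rw [A.oppopp, A.oppopp, A.cupcup, A.ax2b y x] at h
  exact h

lemma DBA.negK1 {x y : D} (h : A.cap x y = A.cap x x) :
    A.cap (A.neg y) (A.neg x) = A.cap (A.neg y) (A.neg y) := by
  calc A.cap (A.neg y) (A.neg x)
      = A.cap (A.neg y) (A.neg (A.cap x y)) := by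
        rw [show A.neg x = A.neg (A.cap x x) from (A.ax4a x).symm, ← h]
    _ = A.cap (A.neg y) (A.neg y) := A.negK2 x y

lemma DBA.oppK1 {x y : D} (h : A.cup x y = A.cup x x) :
    A.cup (A.opp y) (A.opp x) = A.cup (A.opp y) (A.opp y) := by
  calc A.cup (A.opp y) (A.opp x)
      = A.cup (A.opp y) (A.opp (A.cup x y)) := by
        rw [show A.opp x = A.opp (A.cup x x) from (A.ax4b x).symm, ← h]
    _ = A.cup (A.opp y) (A.opp y) := A.oppK2 x y

end Aux

theorem stmt4 {D : Type} (A : DBA D) (x y : D) :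
    A.le x y ↔ (A.le (A.neg y) (A.neg x) ∧ A.le (A.opp y) (A.opp x)) := by
  constructor
  · rintro ⟨h1, h2⟩
    have n1 : A.cap (A.neg y) (A.neg x) = A.cap (A.neg y) (A.neg y) := A.negK1 h1
    have n1' : A.cap (A.neg x) (A.neg y) = A.neg y := by
      rw [A.ax2a (A.neg x), n1, A.negidem]
    have n2 : A.cup (A.neg y) (A.neg x) = A.cup (A.neg x) (A.neg x) := by
      rw [A.ax2b (A.neg y), show A.neg y = A.cap (A.neg x) (A.neg y) from n1'.symm, A.ax5b]
    have h2' : A.cup y x = A.cup y y := by rw [A.ax2b y x, h2]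
    have o2 : A.cup (A.opp y) (A.opp x) = A.cup (A.opp x) (A.opp x) := by
      have := A.oppK1 h2'
      rw [A.ax2b (A.opp x) (A.opp y)] at this
      exact this
    have o2' : A.cup (A.opp y) (A.opp x) = A.opp x := by rw [o2, A.oppidem]
    have o1 : A.cap (A.opp y) (A.opp x) = A.cap (A.opp y) (A.opp y) := by
      rw [show A.opp x = A.cup (A.opp y) (A.opp x) from o2'.symm, A.ax5a]
    exact ⟨⟨n1, n2⟩, ⟨o1, o2⟩⟩
  · rintro ⟨⟨n1, _⟩, ⟨_, o2⟩⟩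
    constructor
    · have := A.negK1 n1
      rw [A.negneg, A.negneg, A.capcap, A.capcap] at this
      exact this
    · have o2' : A.cup (A.opp x) (A.opp y) = A.cup (A.opp x) (A.opp x) := by
        rw [A.ax2b (A.opp x) (A.opp y), o2]
      have := A.oppK1 o2'
      rw [A.oppopp, A.oppopp, A.cupcup, A.cupcup, A.ax2b y x] at this
      exact this
end
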